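/- arXiv:1701.06438 — 2 statements merged into one kernel-verified Lean document; each statement's English description precedes it below -/
import Mathlib

section
/- Let N ≥ 1, let S be the N×N real matrix with S_{ii} = 1 for all i, S_{i+1,i} = −1 for i = 1,…,N−1, and all other entries zero, and let P = diag(1, 1/2, …, 1/N). Then the symmetric tridiagonal matrix Q = P·S + Sᵀ·P, whose entries are Q_{ii} = 2/i, Q_{i,i+1} = Q_{i+1,i} = −1/(i+1), and Q_{ij} = 0 for |i−j| ≥ 2, is positive definite. -/
/-!
Write `S = 1 - J` with `J` the lower shift matrix and `D = diag(d₀, …, d_{N-1})`. Then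
`D S + Sᵀ D = Sᵀ D S + (D - Jᵀ D J)`, and `Jᵀ D J = diag(d₁, …, d_{N-1}, 0)`. For a positive,
strictly decreasing `d` (here `dᵢ = 1/(i+1)`) the first summand is positive semidefinite and the
second is a diagonal matrix with positive entries.
-/

open Matrix

def lowerShift (R : Type*) [Zero R] [One R] (N : ℕ) : Matrix (Fin N) (Fin N) R :=
  of fun i j => if (i : ℕ) = j + 1 then 1 else 0

theorem one_sub_lowerShift_apply {R : Type*} [Ring R] {N : ℕ} (i j : Fin N) :
    (1 - lowerShift R N) i j = if i = j then 1 else if (i : ℕ) = j + 1 then -1 else 0 := by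
  simp only [lowerShift, Matrix.sub_apply, one_apply, of_apply]
  split_ifs <;> simp_all [Fin.ext_iff]

theorem lowerShift_transpose_mul_diagonal_mul {R : Type*} [Semiring R] {N : ℕ} (d : ℕ → R) :
    (lowerShift R N)ᵀ * diagonal (fun i : Fin N => d i) * lowerShift R N =
      diagonal fun i : Fin N => if (i : ℕ) + 1 < N then d (i + 1) else 0 := by
  ext i j
  rw [Matrix.mul_assoc, mul_apply, diagonal_apply]
  simp only [diagonal_mul, transpose_apply, lowerShift, of_apply, ite_mul, one_mul, zero_mul]
  split_ifs with hij h
  · subst hij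
    rw [Finset.sum_eq_single ⟨i + 1, h⟩] <;> intros <;> simp_all [Fin.ext_iff]
  all_goals
    refine Finset.sum_eq_zero fun k _ => ?_
    split_ifs <;> simp_all [Fin.ext_iff]
  omega

theorem posDef_diagonal_mul_one_sub_lowerShift_add {N : ℕ} {d : ℕ → ℝ} (hd : StrictAnti d)
    (hpos : ∀ n, 0 < d n) :
    (diagonal (fun i : Fin N => d i) * (1 - lowerShift ℝ N) +
      (1 - lowerShift ℝ N)ᵀ * diagonal (fun i : Fin N => d i)).PosDef := by
  set D := diagonal fun i : Fin N => d i with hD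
  set J := lowerShift ℝ N
  have hsplit : D * (1 - J) + (1 - J)ᵀ * D = (D - Jᵀ * D * J) + (1 - J)ᵀ * D * (1 - J) := by
    simp only [transpose_sub, transpose_one]
    noncomm_ring
  rw [hsplit, lowerShift_transpose_mul_diagonal_mul, hD, diagonal_sub]
  refine PosDef.add_posSemidef (posDef_diagonal_iff.2 fun i => ?_) ?_
  · split_ifs
    · exact sub_pos.2 (hd (Nat.lt_succ_self i))
    · simpa using hpos i
  · simpa only [conjTranspose_eq_transpose_of_trivial] using
      (PosDef.diagonal fun i : Fin N => hpos i).posSemidef.conjTranspose_mul_mul_same (1 - J)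

theorem platoon_tridiagonal_posDef_general {N : ℕ}
    (S : Matrix (Fin N) (Fin N) ℝ)
    (hS : ∀ i j : Fin N,
      S i j = if i = j then 1 else if (i : ℕ) = (j : ℕ) + 1 then -1 else 0)
    (P : Matrix (Fin N) (Fin N) ℝ)
    (hP : P = Matrix.diagonal fun i : Fin N => (1 : ℝ) / ((i : ℕ) + 1))
    (Q : Matrix (Fin N) (Fin N) ℝ)
    (hQ : Q = P * S + Sᵀ * P) :
    (∀ i : Fin N, Q i i = 2 / ((i : ℕ) + 1)) ∧
    (∀ i j : Fin N, (i : ℕ) + 1 = (j : ℕ) →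
      Q i j = -(1 / ((j : ℕ) + 1)) ∧ Q j i = -(1 / ((j : ℕ) + 1))) ∧
    (∀ i j : Fin N, 2 ≤ |(i : ℤ) - (j : ℤ)| → Q i j = 0) ∧
    Q.PosDef := by
  have hQ_apply i j : Q i j = 1 / ((i : ℕ) + 1) * S i j + S j i * (1 / ((j : ℕ) + 1)) := by
    rw [hQ, hP, Matrix.add_apply, diagonal_mul, mul_diagonal, transpose_apply]
  refine ⟨fun i => ?_, fun i j hij => ?_, fun i j hij => ?_, ?_⟩
  · rw [hQ_apply, hS, if_pos rfl]
    ring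
  · simp [hQ_apply, hS, Fin.ext_iff, ← hij, add_assoc]
  · have hfar : (i : ℕ) ≠ j ∧ (j : ℕ) ≠ i ∧ (i : ℕ) ≠ j + 1 ∧ (j : ℕ) ≠ i + 1 := by
      rw [le_abs'] at hij
      omega
    simp [hQ_apply, hS, Fin.ext_iff, hfar]
  · have hS_eq : S = 1 - lowerShift ℝ N :=
      ext fun i j => (hS i j).trans (one_sub_lowerShift_apply i j).symm
    rw [hQ, hP, hS_eq]
    refine posDef_diagonal_mul_one_sub_lowerShift_add (d := fun n : ℕ => 1 / ((n : ℝ) + 1))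
      (fun m n hmn => ?_) fun n => by positivity
    dsimp only
    gcongr

/-- With `S` the platoon matrix and `P = diag(1, 1/2, …, 1/N)`,
the symmetric tridiagonal matrix `Q = P·S + Sᵀ·P` has entries `Q_{ii} = 2/i`,
`Q_{i,i+1} = Q_{i+1,i} = −1/(i+1)` (1-indexed; 0-indexed below) and
`Q_{ij} = 0` for `|i−j| ≥ 2`, and `Q` is positive definite. -/
theorem platoon_tridiagonal_posDef {N : ℕ} (hN : 1 ≤ N)
    (S : Matrix (Fin N) (Fin N) ℝ)
    (hS : ∀ i j : Fin N,
      S i j = if i = j then 1 else if (i : ℕ) = (j : ℕ) + 1 then -1 else 0)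
    (P : Matrix (Fin N) (Fin N) ℝ)
    (hP : P = Matrix.diagonal fun i : Fin N => (1 : ℝ) / ((i : ℕ) + 1))
    (Q : Matrix (Fin N) (Fin N) ℝ)
    (hQ : Q = P * S + Sᵀ * P) :
    (∀ i : Fin N, Q i i = 2 / ((i : ℕ) + 1)) ∧
    (∀ i j : Fin N, (i : ℕ) + 1 = (j : ℕ) →
      Q i j = -(1 / ((j : ℕ) + 1)) ∧ Q j i = -(1 / ((j : ℕ) + 1))) ∧
    (∀ i j : Fin N, 2 ≤ |(i : ℤ) - (j : ℤ)| → Q i j = 0) ∧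
    Q.PosDef :=
  platoon_tridiagonal_posDef_general S hS P hP Q hQ
end

section
/- Let M̲ > 0, M̄ > 0, let ξ ∈ (−M̲, M̄), and define ε(ξ) = ln((1 + ξ/M̲)/(1 − ξ/M̄)). If |ε(ξ)| ≤ ε̄ for some ε̄ ≥ 0, then −M̲·(e^{ε̄} − 1)/(e^{ε̄} + M̲/M̄) ≤ ξ ≤ M̄·(e^{ε̄} − 1)/(e^{ε̄} + M̄/M̲); moreover these two bounds satisfy −M̲ < −M̲·(e^{ε̄} − 1)/(e^{ε̄} + M̲/M̄) and M̄·(e^{ε̄} − 1)/(e^{ε̄} + M̄/M̲) < M̄, so ξ is confined to a compact subinterval strictly inside (−M̲, M̄). -/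
/-!
The transformation `ε ξ = log ((1 + ξ/M̲)/(1 - ξ/M̄))` is an increasing bijection of `(-M̲, M̄)`
onto `ℝ`, and its inverse is `y ↦ M̄ (eʸ - 1)/(eʸ + M̄/M̲)`; so `ε ξ ≤ ε̄`
is equivalent to the upper bound on `ξ`. Reflecting `ξ ↦ -ξ` swaps `M̲` with `M̄` and negates `ε`,
which turns `-ε̄ ≤ ε ξ` into the lower bound. The inverse takes values in `(-M̲, M̄)`, which
gives the strict inequalities.
-/

open Real

namespace PrescribedPerformance

noncomputable def errorTransform (a b ξ : ℝ) : ℝ :=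
  log ((1 + ξ / a) / (1 - ξ / b))

noncomputable def errorTransformInv (a b y : ℝ) : ℝ :=
  b * (exp y - 1) / (exp y + b / a)

theorem errorTransform_neg (a b ξ : ℝ) : errorTransform a b (-ξ) = -errorTransform b a ξ := by
  rw [errorTransform, errorTransform, ← log_inv, inv_div]
  ring_nf

theorem errorTransform_le_iff {a b ξ : ℝ} (ha : 0 < a) (hb : 0 < b) (hξ : ξ ∈ Set.Ioo (-a) b)
    (y : ℝ) :
    errorTransform a b ξ ≤ y ↔ ξ ≤ errorTransformInv a b y := by
  obtain ⟨hξa, hξb⟩ := hξ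
  have hnum : 0 < 1 + ξ / a := by
    have : -1 < ξ / a := by rw [lt_div_iff₀ ha]; linarith
    linarith
  have hden : 0 < 1 - ξ / b := by
    have : ξ / b < 1 := (div_lt_one hb).2 hξb
    linarith
  have hsum : 0 < exp y + b / a := by positivity
  have key : ξ * (exp y + b / a) - b * (exp y - 1) = b * (1 + ξ / a - exp y * (1 - ξ / b)) := by
    field_simp
    ring
  rw [errorTransform, errorTransformInv, log_le_iff_le_exp (div_pos hnum hden),
    div_le_iff₀ hden, le_div_iff₀ hsum, ← mul_le_mul_iff_of_pos_left hb]
  constructor <;> intro h <;> linarith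

theorem errorTransformInv_lt {a b : ℝ} (ha : 0 < a) (hb : 0 < b) (y : ℝ) :
    errorTransformInv a b y < b := by
  have hsum : 0 < exp y + b / a := by positivity
  rw [errorTransformInv, div_lt_iff₀ hsum]
  exact mul_lt_mul_of_pos_left (by linarith [div_pos hb ha]) hb

end PrescribedPerformance

open PrescribedPerformance in
theorem bounded_transformed_error_confines_xi_general
    (Mlo Mhi : ℝ) (hlo : 0 < Mlo) (hhi : 0 < Mhi)
    (ξ : ℝ) (hξ : ξ ∈ Set.Ioo (-Mlo) Mhi)
    (εbar : ℝ)
    (h : |Real.log ((1 + ξ / Mlo) / (1 - ξ / Mhi))| ≤ εbar) :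
    (-(Mlo * (Real.exp εbar - 1) / (Real.exp εbar + Mlo / Mhi)) ≤ ξ ∧
      ξ ≤ Mhi * (Real.exp εbar - 1) / (Real.exp εbar + Mhi / Mlo)) ∧
    -Mlo < -(Mlo * (Real.exp εbar - 1) / (Real.exp εbar + Mlo / Mhi)) ∧
    Mhi * (Real.exp εbar - 1) / (Real.exp εbar + Mhi / Mlo) < Mhi := by
  obtain ⟨hε_lower, hε_upper⟩ := abs_le.1 h
  have upper : ξ ≤ errorTransformInv Mlo Mhi εbar :=
    (errorTransform_le_iff hlo hhi hξ εbar).1 hε_upper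
  have hξ_neg : -ξ ∈ Set.Ioo (-Mhi) Mlo := ⟨neg_lt_neg hξ.2, neg_lt.1 hξ.1⟩
  have lower : -ξ ≤ errorTransformInv Mhi Mlo εbar := by
    refine (errorTransform_le_iff hhi hlo hξ_neg εbar).1 ?_
    rw [errorTransform_neg]
    exact neg_le.1 hε_lower
  exact ⟨⟨neg_le.1 lower, upper⟩, neg_lt_neg (errorTransformInv_lt hhi hlo εbar),
    errorTransformInv_lt hlo hhi εbar⟩

/-- If `ξ ∈ (-M̲, M̄)` and the transformed error
`ε(ξ) = ln((1 + ξ/M̲)/(1 - ξ/M̄))` satisfies `|ε(ξ)| ≤ ε̄`, then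
`-M̲·(e^ε̄ - 1)/(e^ε̄ + M̲/M̄) ≤ ξ ≤ M̄·(e^ε̄ - 1)/(e^ε̄ + M̄/M̲)`, and these
bounds lie strictly inside `(-M̲, M̄)`. -/
theorem bounded_transformed_error_confines_xi
    (Mlo Mhi : ℝ) (hlo : 0 < Mlo) (hhi : 0 < Mhi)
    (ξ : ℝ) (hξ : ξ ∈ Set.Ioo (-Mlo) Mhi)
    (εbar : ℝ) (hεbar : 0 ≤ εbar)
    (h : |Real.log ((1 + ξ / Mlo) / (1 - ξ / Mhi))| ≤ εbar) :
    (-(Mlo * (Real.exp εbar - 1) / (Real.exp εbar + Mlo / Mhi)) ≤ ξ ∧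
      ξ ≤ Mhi * (Real.exp εbar - 1) / (Real.exp εbar + Mhi / Mlo)) ∧
    -Mlo < -(Mlo * (Real.exp εbar - 1) / (Real.exp εbar + Mlo / Mhi)) ∧
    Mhi * (Real.exp εbar - 1) / (Real.exp εbar + Mhi / Mlo) < Mhi :=
  bounded_transformed_error_confines_xi_general Mlo Mhi hlo hhi ξ hξ εbar h
end
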